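/- Every J-circuit that is undominated with respect to (J, ∅) (i.e., minimal in the componentwise order among J-circuits) is produced by the greedy procedure for some ordering of J; in particular it is produced using the ordering of J by increasing assigned values. -/

import Mathlib

/-- The partial assignment `f` on `J` creates no cycle. -/
def NoCycleOn {n : ℕ} (f : Fin n → Fin n) (J : Finset (Fin n)) : Prop :=
  ¬ ∃ j ∈ J, ∃ k, 0 < k ∧ (∀ t < k, f^[t] j ∈ J) ∧ f^[k] j = j

/-- A `J`-circuit: an injective, cycle-free partial assignment on `J`. -/
def IsJCircuit {n : ℕ} (J : Finset (Fin n)) (f : Fin n → Fin n) : Prop :=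
  Set.InjOn f J ∧ NoCycleOn f J

/-- `g` dominates `f` with respect to the partition `(J₊, J₋)`. -/
def Dominates {n : ℕ} (v : Fin n → ℝ) (Jp Jm : Finset (Fin n)) (g f : Fin n → Fin n) : Prop :=
  (∃ j ∈ Jp ∪ Jm, g j ≠ f j) ∧ (∀ j ∈ Jp, v (g j) ≤ v (f j)) ∧ (∀ j ∈ Jm, v (f j) ≤ v (g j))

/-- `f` is the greedy assignment with respect to the ordering `l` of `J = J₊ ∪ J₋`. -/
def GreedyWrt {n : ℕ} (v : Fin n → ℝ) (Jp Jm : Finset (Fin n)) (l : List (Fin n))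
    (f : Fin n → Fin n) : Prop :=
  ∀ i : Fin l.length,
    (l.get i ∈ Jp →
      IsLeast (v '' {k : Fin n |
        IsJCircuit (l.take (i.1 + 1)).toFinset (Function.update f (l.get i) k)})
        (v (f (l.get i)))) ∧
    (l.get i ∈ Jm →
      IsGreatest (v '' {k : Fin n |
        IsJCircuit (l.take (i.1 + 1)).toFinset (Function.update f (l.get i) k)})
        (v (f (l.get i))))

/-! If some `k` with `v k < v (f j)` were admissible at the step of `j = l[i]`, one could
build a `J`-circuit dominating `f`. The value `k` is not used by `f` elsewhere on `J`: earlier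
elements are excluded by injectivity of the partial assignment, later ones have larger values.
View `f` on `J` as a functional graph. If `k` does not lead to `j` in this graph, setting
`f j := k` is already a dominating circuit. Otherwise the path from `k` to `j` must leave the
first `i + 1` elements of `l` (or the partial assignment would close a cycle), say at `p`, and
`v (f p) > v (f j)`; setting `f j := k` and `f p := f j` breaks the new cycle and dominates `f`. -/

open Function Relation

section StepOn

variable {α : Type*} {f : α → α} {s t : Set α} {a b x y z : α}

def StepOn (f : α → α) (s : Set α) (x y : α) : Prop := x ∈ s ∧ f x = y

lemma reflTransGen_stepOn_mono (hst : s ⊆ t) (h : ReflTransGen (StepOn f s) x y) :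
    ReflTransGen (StepOn f t) x y :=
  ReflTransGen.mono (fun _ _ h => ⟨hst h.1, h.2⟩) _ _ h

lemma reflTransGen_stepOn_iff :
    ReflTransGen (StepOn f s) x y ↔ ∃ k, (∀ m < k, f^[m] x ∈ s) ∧ f^[k] x = y := by
  constructor
  · intro h
    induction h with
    | refl => exact ⟨0, by simp, rfl⟩
    | tail _ hyz ih =>
      obtain ⟨k, hks, rfl⟩ := ih
      exact ⟨k + 1, Nat.forall_lt_succ_right.2 ⟨hks, hyz.1⟩, by rw [iterate_succ_apply', hyz.2]⟩
  · rintro ⟨k, hks, rfl⟩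
    induction k with
    | zero => rfl
    | succ k ih =>
      obtain ⟨hks, hk⟩ := Nat.forall_lt_succ_right.1 hks
      exact (ih hks).tail ⟨hk, (iterate_succ_apply' f k x).symm⟩

lemma transGen_stepOn_iff :
    TransGen (StepOn f s) x y ↔ ∃ k, 0 < k ∧ (∀ m < k, f^[m] x ∈ s) ∧ f^[k] x = y := by
  rw [TransGen.tail'_iff]
  constructor
  · rintro ⟨w, hxw, hw, rfl⟩
    obtain ⟨k, hks, rfl⟩ := reflTransGen_stepOn_iff.1 hxw
    exact ⟨k + 1, k.succ_pos, Nat.forall_lt_succ_right.2 ⟨hks, hw⟩, iterate_succ_apply' f k x⟩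
  · rintro ⟨_ | k, hk, hks, rfl⟩
    · exact absurd hk (lt_irrefl 0)
    obtain ⟨hks, hk⟩ := Nat.forall_lt_succ_right.1 hks
    exact ⟨_, reflTransGen_stepOn_iff.2 ⟨k, hks, rfl⟩, hk, (iterate_succ_apply' f k x).symm⟩

lemma reflTransGen_stepOn_sdiff_singleton (h : ReflTransGen (StepOn f s) x y) :
    ReflTransGen (StepOn f (s \ {y})) x y := by
  induction h using ReflTransGen.head_induction_on with
  | refl => rfl
  | @head x _ hx _ ih =>
    by_cases hxy : x = y
    · rw [hxy]
    · exact ih.head ⟨⟨hx.1, hxy⟩, hx.2⟩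

lemma reflTransGen_stepOn_update [DecidableEq α]
    (h : ReflTransGen (StepOn (update f a b) s) x y) :
    ReflTransGen (StepOn f (s \ {a})) x y ∨
      ReflTransGen (StepOn f s) x a ∧ ReflTransGen (StepOn f s) b y := by
  induction h with
  | refl => exact .inl .refl
  | @tail y _ _ hy ih =>
    obtain ⟨hys, rfl⟩ := hy
    by_cases hya : y = a
    · subst hya
      refine .inr ⟨?_, by rw [update_self]⟩
      exact ih.elim (reflTransGen_stepOn_mono Set.sdiff_subset) And.left
    · rw [update_of_ne hya]
      exact ih.imp (·.tail ⟨⟨hys, hya⟩, rfl⟩) fun h => ⟨h.1, h.2.tail ⟨hys, rfl⟩⟩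

lemma exists_exit_of_reflTransGen_stepOn (h : ReflTransGen (StepOn f s) x y)
    (ht : ¬ ReflTransGen (StepOn f t) x y) :
    ∃ p ∈ s, p ∉ t ∧ ReflTransGen (StepOn f t) x p ∧ ReflTransGen (StepOn f s) p y := by
  induction h using ReflTransGen.head_induction_on with
  | refl => exact absurd .refl ht
  | @head x _ hx hzy ih =>
    by_cases hxt : x ∈ t
    · obtain ⟨p, hps, hpt, hzp, hpy⟩ := ih fun hzy' => ht (hzy'.head ⟨hxt, hx.2⟩)
      exact ⟨p, hps, hpt, hzp.head ⟨hxt, hx.2⟩, hpy⟩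
    · exact ⟨x, hx.1, hxt, .refl, hzy.head hx⟩

lemma reflTransGen_stepOn_total (hxy : ReflTransGen (StepOn f s) x y)
    (hxz : ReflTransGen (StepOn f t) x z) :
    ReflTransGen (StepOn f s) x z ∨ ReflTransGen (StepOn f t) y z := by
  induction hxy using ReflTransGen.head_induction_on generalizing z with
  | refl => exact .inr hxz
  | @head x _ hx _ ih =>
    obtain ⟨hxs, rfl⟩ := hx
    rcases hxz.cases_head with rfl | ⟨_, ⟨-, rfl⟩, hz⟩
    · exact .inl .refl
    · exact (ih hz).imp_left (·.head ⟨hxs, rfl⟩)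

end StepOn

lemma Set.InjOn.update {α β : Type*} [DecidableEq α] {f : α → β} {s : Set α} {a : α} {b : β}
    (hf : InjOn f (s \ {a})) (hb : b ∉ f '' (s \ {a})) : InjOn (update f a b) s := by
  intro x hx y hy hxy
  by_cases hxa : x = a <;> by_cases hya : y = a
  · rw [hxa, hya]
  · subst hxa
    rw [update_self, update_of_ne hya] at hxy
    exact (hb ⟨y, ⟨hy, hya⟩, hxy.symm⟩).elim
  · subst hya
    rw [update_self, update_of_ne hxa] at hxy
    exact (hb ⟨x, ⟨hx, hxa⟩, hxy⟩).elim
  · rw [update_of_ne hxa, update_of_ne hya] at hxy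
    exact hf ⟨hx, hxa⟩ ⟨hy, hya⟩ hxy

lemma apply_update_le {α β γ : Type*} [DecidableEq α] [Preorder β] {v : γ → β} {f : α → γ}
    {a : α} {b : γ} (h : v b ≤ v (f a)) (x : α) : v (update f a b x) ≤ v (f x) := by
  rcases eq_or_ne x a with rfl | hx
  · rwa [update_self]
  · rw [update_of_ne hx]

lemma List.get_mem_take_succ {α : Type*} (l : List α) (i : Fin l.length) :
    l.get i ∈ l.take (i.1 + 1) :=
  List.mem_iff_getElem.2 ⟨i, by simp, by simp⟩

lemma List.Pairwise.rel_get_of_notMem_take {α : Type*} {R : α → α → Prop} {l : List α}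
    (h : l.Pairwise R) (i : Fin l.length) {a : α} (ha : a ∈ l) (hai : a ∉ l.take (i.1 + 1)) :
    R (l.get i) a := by
  rw [← List.take_append_drop (i.1 + 1) l, List.pairwise_append] at h
  rw [← List.take_append_drop (i.1 + 1) l, List.mem_append] at ha
  exact h.2.2 _ (l.get_mem_take_succ i) _ (ha.resolve_left hai)

section JCircuit

variable {n : ℕ} {f g : Fin n → Fin n} {I J : Finset (Fin n)} {j k : Fin n} {v : Fin n → ℝ}

lemma noCycleOn_iff : NoCycleOn f J ↔ ∀ a, ¬ TransGen (StepOn f J) a a := by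
  simp only [NoCycleOn, transGen_stepOn_iff, Finset.mem_coe]
  constructor
  · rintro h a ⟨k, hk, hks, hka⟩
    exact h ⟨a, by simpa using hks 0 hk, k, hk, hks, hka⟩
  · rintro h ⟨a, -, k, hk, hks, hka⟩
    exact h a ⟨k, hk, hks, hka⟩

lemma NoCycleOn.mono (hf : NoCycleOn f J) (hIJ : I ⊆ J) : NoCycleOn f I :=
  fun ⟨a, ha, k, hk, hks, hka⟩ => hf ⟨a, hIJ ha, k, hk, fun m hm => hIJ (hks m hm), hka⟩

lemma IsJCircuit.mono (hf : IsJCircuit J f) (hIJ : I ⊆ J) : IsJCircuit I f :=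
  ⟨hf.1.mono (Finset.coe_subset.2 hIJ), hf.2.mono hIJ⟩

lemma noCycleOn_update_iff (hj : j ∈ J) (hf : NoCycleOn f J) :
    NoCycleOn (update f j k) J ↔ ¬ ReflTransGen (StepOn f J) k j := by
  rw [noCycleOn_iff]
  constructor
  · intro hg hkj
    refine hg j (TransGen.head' ⟨hj, update_self j k f⟩ ?_)
    refine ReflTransGen.mono ?_ _ _ (reflTransGen_stepOn_sdiff_singleton hkj)
    rintro x _ ⟨⟨hx, hxj⟩, rfl⟩
    exact ⟨hx, update_of_ne hxj k f⟩
  · intro hkj c hc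
    obtain ⟨d, ⟨hcJ, rfl⟩, hdc⟩ := TransGen.head'_iff.1 hc
    rcases eq_or_ne c j with rfl | hcj
    · rw [update_self] at hdc
      exact hkj ((reflTransGen_stepOn_update hdc).elim
        (reflTransGen_stepOn_mono Set.sdiff_subset) And.right)
    · rw [update_of_ne hcj] at hdc
      rcases reflTransGen_stepOn_update hdc with hfc | ⟨hfj, hkc⟩
      · exact noCycleOn_iff.1 hf c
          (TransGen.head' ⟨hcJ, rfl⟩ (reflTransGen_stepOn_mono Set.sdiff_subset hfc))
      · exact hkj (hkc.trans (hfj.head ⟨hcJ, rfl⟩))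

lemma dominates_empty_of_lt (hj : j ∈ J) (hlt : v (g j) < v (f j))
    (hle : ∀ a ∈ J, v (g a) ≤ v (f a)) : Dominates v J ∅ g f :=
  ⟨⟨j, by simpa using hj, fun h => hlt.ne (by rw [h])⟩, hle, by simp⟩

lemma exists_dominates_of_not_reflTransGen (hf : IsJCircuit J f) (hj : j ∈ J)
    (hk : v k < v (f j)) (hkf : k ∉ f '' (↑J \ {j})) (hkj : ¬ ReflTransGen (StepOn f J) k j) :
    ∃ g, IsJCircuit J g ∧ Dominates v J ∅ g f :=
  ⟨update f j k, ⟨(hf.1.mono Set.sdiff_subset).update hkf, (noCycleOn_update_iff hj hf.2).2 hkj⟩,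
    dominates_empty_of_lt hj (by rwa [update_self]) fun a _ => apply_update_le hk.le a⟩

lemma exists_dominates_of_reflTransGen (hf : IsJCircuit J f) (hIJ : I ⊆ J) (hj : j ∈ I)
    (hgt : ∀ a ∈ J, a ∉ I → v (f j) < v (f a)) (hk : v k < v (f j))
    (hkf : k ∉ f '' (↑J \ {j})) (hkj : ReflTransGen (StepOn f J) k j)
    (hkj' : ¬ ReflTransGen (StepOn f I) k j) :
    ∃ g, IsJCircuit J g ∧ Dominates v J ∅ g f := by
  obtain ⟨p, hpJ, hpI, hkp, hpj⟩ := exists_exit_of_reflTransGen_stepOn hkj hkj'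
  have hjJ : j ∈ J := hIJ hj
  have hpj_ne : p ≠ j := fun hpj_eq => hpI (hpj_eq ▸ hj)
  have hfj : ¬ ReflTransGen (StepOn f J) (f j) j := fun hfj =>
    noCycleOn_iff.1 hf.2 j (TransGen.head' ⟨hjJ, rfl⟩ hfj)
  set h := update f p (f j) with hh
  have h_noCycle : NoCycleOn h J :=
    (noCycleOn_update_iff hpJ hf.2).2 fun hjp => hfj (hjp.trans hpj)
  -- going from `k`, the graph of `f` meets `p` before `j`, and `h` sends `p` to `f j`,
  -- from which `j` is unreachable
  have hkj_h : ¬ ReflTransGen (StepOn h J) k j := by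
    intro hkj_h
    rcases reflTransGen_stepOn_update hkj_h with hkj_f | ⟨-, hfj'⟩
    · rcases reflTransGen_stepOn_total hkp hkj_f with hkj_I | hpj_f
      · exact hkj' hkj_I
      · rcases hpj_f.cases_head with hpj_eq | ⟨_, ⟨⟨-, hpp⟩, -⟩, -⟩
        · exact hpj_ne hpj_eq
        · exact hpp rfl
    · exact hfj hfj'
  have h_inj : Set.InjOn h (↑J \ {j}) := by
    refine (hf.1.mono fun x hx => hx.1.1).update ?_
    rintro ⟨x, ⟨⟨hxJ, hxj⟩, -⟩, hx⟩
    exact hxj (hf.1 hxJ hjJ hx)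
  have hkh : k ∉ h '' (↑J \ {j}) := by
    rintro ⟨x, ⟨hxJ, hxj⟩, hx⟩
    rcases eq_or_ne x p with rfl | hxp
    · rw [hh, update_self] at hx
      exact hk.ne (by rw [hx])
    · exact hkf ⟨x, ⟨hxJ, hxj⟩, by rwa [hh, update_of_ne hxp] at hx⟩
  have hhj : h j = f j := update_of_ne hpj_ne.symm _ _
  refine ⟨update h j k, ⟨h_inj.update hkh, (noCycleOn_update_iff hjJ h_noCycle).2 hkj_h⟩,
    dominates_empty_of_lt hjJ (by rwa [update_self]) fun a _ => ?_⟩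
  exact (apply_update_le (hhj ▸ hk.le) a).trans (apply_update_le (hgt p hpJ hpI).le a)

lemma exists_dominates_of_lt (hf : IsJCircuit J f) (hIJ : I ⊆ J) (hj : j ∈ I)
    (hgt : ∀ a ∈ J, a ∉ I → v (f j) < v (f a)) (hk : v k < v (f j))
    (hkI : IsJCircuit I (update f j k)) :
    ∃ g, IsJCircuit J g ∧ Dominates v J ∅ g f := by
  have hkf : k ∉ f '' (↑J \ {j}) := by
    rintro ⟨a, ⟨haJ, haj⟩, rfl⟩
    by_cases haI : a ∈ I
    · exact haj (hkI.1 haI hj (by rw [update_of_ne haj, update_self]))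
    · exact (hgt a haJ haI).not_gt hk
  by_cases hkj : ReflTransGen (StepOn f J) k j
  · exact exists_dominates_of_reflTransGen hf hIJ hj hgt hk hkf hkj
      ((noCycleOn_update_iff hj (hf.2.mono hIJ)).1 hkI.2)
  · exact exists_dominates_of_not_reflTransGen hf (hIJ hj) hk hkf hkj

end JCircuit

theorem stmt_7 (n : ℕ) (v : Fin n → ℝ)
    (J : Finset (Fin n)) (f : Fin n → Fin n) (hf : IsJCircuit J f)
    (hund : ¬ ∃ g : Fin n → Fin n, IsJCircuit J g ∧ Dominates v J ∅ g f)
    (l : List (Fin n)) (hl : l.toFinset = J)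
    (hsort : l.Pairwise fun a b => v (f a) < v (f b)) :
    GreedyWrt v J ∅ l f := by
  intro i
  refine ⟨fun _ => ?_, fun h => absurd h (Finset.notMem_empty _)⟩
  set I := (l.take (i.1 + 1)).toFinset
  have hIJ : I ⊆ J := fun a ha =>
    hl ▸ List.mem_toFinset.2 (List.take_subset _ _ (List.mem_toFinset.1 ha))
  have hj : l.get i ∈ I := List.mem_toFinset.2 (l.get_mem_take_succ i)
  have hgt : ∀ a ∈ J, a ∉ I → v (f (l.get i)) < v (f a) := fun a ha haI =>
    hsort.rel_get_of_notMem_take i (by simpa [← hl] using ha) (by simpa [I] using haI)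
  refine ⟨⟨f (l.get i), by simpa using hf.mono hIJ, rfl⟩, ?_⟩
  rintro _ ⟨k, hk, rfl⟩
  by_contra! hlt
  exact hund (exists_dominates_of_lt hf hIJ hj hgt hlt hk)
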